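/- Let L_{m,n} be the (m,n)-lollipop graph with n ≥ 2. Then the inertia of its eccentricity matrix is (2, 2, m+n−4): it has exactly two positive eigenvalues, two negative eigenvalues, and zero with multiplicity m+n−4. -/

import Mathlib

/-!
Every nonzero entry of `ε(L_{m,n})` pairs a clique vertex off the bridge with a vertex in the far
half of the path, or the end of the path with the bridge vertex of the clique or a vertex in the
near half of the path. Hence `ε = u wᵀ + w uᵀ + a zᵀ + z aᵀ` for four linearly independent vectors
with `u ⬝ w = a ⬝ z = 0`. Writing `ε = Mᵀ K M`, where `M` has rows `u, w, a, z` and `K` swaps the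
coordinates in pairs, `ε` has the nonzero eigenvalues of the `4 × 4` matrix `K M Mᵀ`, whose trace
`2 (u ⬝ w + a ⬝ z)` vanishes and whose determinant `det (M Mᵀ)` is positive. Four real numbers
with zero sum and positive product are two positive and two negative ones.
-/

open Matrix

/-- The eccentricity of a vertex: the largest distance from it to any vertex. -/
noncomputable def SimpleGraph.ecc {V : Type*} [Fintype V] (G : SimpleGraph V) (v : V) : ℕ :=
  Finset.univ.sup (G.dist v)

/-- The eccentricity matrix of a graph: `ε(G)_{uw} = d(u,w)` if
`d(u,w) = min{e(u), e(w)}`, and `0` otherwise. -/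
noncomputable def SimpleGraph.eccMatrix {V : Type*} [Fintype V] (G : SimpleGraph V) :
    Matrix V V ℝ :=
  Matrix.of fun u w =>
    if G.dist u w = min (G.ecc u) (G.ecc w) then (G.dist u w : ℝ) else 0

open Polynomial

/-- The `(m,n)`-lollipop graph: the complete graph `K_m` joined to the path `P_n`
by a bridge. -/
def lollipop (m n : ℕ) : SimpleGraph (Fin m ⊕ Fin n) :=
  SimpleGraph.fromRel fun x y =>
    (∃ i j : Fin m, x = Sum.inl i ∧ y = Sum.inl j) ∨
    (∃ i j : Fin n, x = Sum.inr i ∧ y = Sum.inr j ∧ (j : ℕ) = (i : ℕ) + 1) ∨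
    (∃ (i : Fin m) (j : Fin n), x = Sum.inl i ∧ y = Sum.inr j ∧ (i : ℕ) = 0 ∧ (j : ℕ) = 0)

namespace SimpleGraph

variable {V : Type*} {G : SimpleGraph V}

theorem Walk.abs_sub_le_length {f : V → ℤ} (hf : ∀ ⦃x y⦄, G.Adj x y → |f x - f y| ≤ 1)
    {x y : V} (p : G.Walk x y) : |f x - f y| ≤ p.length := by
  induction p with
  | nil => simp
  | @cons x y z hxy p ih =>
    calc |f x - f z| ≤ |f x - f y| + |f y - f z| := abs_sub_le _ _ _
      _ ≤ 1 + p.length := add_le_add (hf hxy) ih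
      _ = (cons hxy p).length := by simp [add_comm]

theorem dist_eq_length_of_length_eq_abs_sub {f : V → ℤ} (hf : ∀ ⦃x y⦄, G.Adj x y → |f x - f y| ≤ 1)
    {x y : V} (p : G.Walk x y) (hp : (p.length : ℤ) = |f x - f y|) : G.dist x y = p.length := by
  refine le_antisymm (dist_le p) ?_
  obtain ⟨q, hq⟩ := Reachable.exists_walk_length_eq_dist ⟨p⟩
  have := q.abs_sub_le_length hf
  rw [hq, ← hp] at this
  exact_mod_cast this

variable [Fintype V]

theorem dist_le_ecc (v w : V) : G.dist v w ≤ G.ecc v :=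
  Finset.le_sup (Finset.mem_univ w)

theorem ecc_le_iff {v : V} {k : ℕ} : G.ecc v ≤ k ↔ ∀ w, G.dist v w ≤ k := by
  simp [ecc]

theorem eccMatrix_comm (v w : V) : G.eccMatrix v w = G.eccMatrix w v := by
  simp only [eccMatrix, of_apply, dist_comm, min_comm]

end SimpleGraph

noncomputable def Multiset.inertia (s : Multiset ℝ) : ℕ × ℕ × ℕ :=
  (card (s.filter (0 < ·)), card (s.filter (· < 0)), s.count 0)

/-- For a symmetric matrix, whose characteristic polynomial splits over `ℝ`, these are the
numbers of positive, negative and zero eigenvalues, counted with multiplicity. -/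
noncomputable def Matrix.inertia {V : Type*} [Fintype V] [DecidableEq V] (A : Matrix V V ℝ) :
    ℕ × ℕ × ℕ :=
  A.charpoly.roots.inertia

namespace Multiset

theorem inertia_add (s t : Multiset ℝ) : (s + t).inertia = s.inertia + t.inertia := by
  simp [inertia, filter_add]

theorem inertia_nsmul_zero (k : ℕ) : (k • {0} : Multiset ℝ).inertia = (0, 0, k) := by
  simp +contextual [inertia, nsmul_singleton, mem_replicate]

theorem inertia_eq_of_card_eq_four {s : Multiset ℝ} (hcard : card s = 4) (hsum : s.sum = 0)
    (hprod : 0 < s.prod) : s.inertia = (2, 2, 0) := by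
  obtain ⟨a, b, c, d, rfl⟩ : ∃ a b c d : ℝ, s = {a, b, c, d} := by
    obtain ⟨a, ha⟩ := card_pos_iff_exists_mem.mp (hcard ▸ four_pos)
    obtain ⟨t, rfl⟩ := exists_cons_of_mem ha
    obtain ⟨b, c, d, rfl⟩ := card_eq_three.mp (by simpa using hcard)
    exact ⟨a, b, c, d, rfl⟩
  simp only [insert_eq_cons, sum_cons, sum_singleton, prod_cons, prod_singleton] at hsum hprod
  obtain ⟨ha | ha, hb | hb, hc | hc, hd | hd⟩ :
      (a < 0 ∨ 0 < a) ∧ (b < 0 ∨ 0 < b) ∧ (c < 0 ∨ 0 < c) ∧ (d < 0 ∨ 0 < d) := by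
    simpa [← ne_iff_lt_or_gt] using hprod.ne'
  all_goals first
    | linarith
    | simp [inertia, mul_pos_iff, mul_neg_iff, filter_singleton, ha, hb, hc, hd, ha.ne, hb.ne,
        hc.ne, hd.ne, ha.ne', hb.ne', hc.ne', hd.ne', ha.not_gt, hb.not_gt, hc.not_gt,
        hd.not_gt] at hprod ⊢

end Multiset

namespace Matrix

variable {V : Type*} [Fintype V] [DecidableEq V]

theorem inertia_eq_of_charpoly_eq_X_pow_mul {A : Matrix V V ℝ} {B : Matrix (Fin 4) (Fin 4) ℝ}
    (hA : A.IsHermitian) (h4 : 4 ≤ Fintype.card V)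
    (hAB : A.charpoly = X ^ (Fintype.card V - 4) * B.charpoly) (htrace : B.trace = 0)
    (hdet : 0 < B.det) :
    A.inertia = (2, 2, Fintype.card V - 4) := by
  have hroots : A.charpoly.roots = (Fintype.card V - 4) • {0} + B.charpoly.roots := by
    rw [hAB, roots_mul (hAB ▸ A.charpoly_monic.ne_zero), roots_X_pow]
  have hcardB : Multiset.card B.charpoly.roots = 4 := by
    have := (splits_iff_card_roots.mp hA.splits_charpoly).trans (charpoly_natDegree_eq_dim A)
    rw [hroots, Multiset.card_add, Multiset.card_nsmul, Multiset.card_singleton] at this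
    omega
  have hsplit : B.charpoly.Splits := by
    rw [splits_iff_card_roots, hcardB, charpoly_natDegree_eq_dim, Fintype.card_fin]
  rw [inertia, hroots, Multiset.inertia_add, Multiset.inertia_nsmul_zero,
    Multiset.inertia_eq_of_card_eq_four hcardB]
  · rfl
  · rwa [← trace_eq_sum_roots_charpoly_of_splits hsplit]
  · rwa [← det_eq_prod_roots_charpoly_of_splits hsplit]

def swapPairs : Matrix (Fin 4) (Fin 4) ℝ :=
  !![0, 1, 0, 0; 1, 0, 0, 0; 0, 0, 0, 1; 0, 0, 1, 0]

theorem trace_swapPairs_mul (G : Matrix (Fin 4) (Fin 4) ℝ) :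
    (swapPairs * G).trace = G 1 0 + G 0 1 + G 3 2 + G 2 3 := by
  simp [trace, Fin.sum_univ_four, swapPairs, vecMul, dotProduct]

theorem det_swapPairs : swapPairs.det = 1 := by
  simp [swapPairs, det_succ_row_zero, Fin.sum_univ_succ, Fin.succAbove]

omit [Fintype V] [DecidableEq V] in
theorem vecMulVec_add_eq_transpose_mul_swapPairs_mul (u w a z : V → ℝ) :
    vecMulVec u w + vecMulVec w u + vecMulVec a z + vecMulVec z a =
      (of ![u, w, a, z])ᵀ * (swapPairs * of ![u, w, a, z]) := by
  ext x y
  simp [vecMulVec, mul_apply, Fin.sum_univ_four, swapPairs]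

theorem inertia_vecMulVec_add {u w a z : V → ℝ} (hind : LinearIndependent ℝ ![u, w, a, z])
    (huw : u ⬝ᵥ w = 0) (haz : a ⬝ᵥ z = 0) :
    (vecMulVec u w + vecMulVec w u + vecMulVec a z + vecMulVec z a).inertia =
      (2, 2, Fintype.card V - 4) := by
  set M : Matrix (Fin 4) V ℝ := of ![u, w, a, z]
  have h4 : 4 ≤ Fintype.card V := by
    simpa using hind.fintype_card_le_finrank
  have hgram : (M * Mᵀ).PosDef := by
    simpa using PosDef.mul_conjTranspose_self M (vecMul_injective_iff.mpr hind)
  refine inertia_eq_of_charpoly_eq_X_pow_mul (B := swapPairs * M * Mᵀ) ?_ h4 ?_ ?_ ?_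
  · simp only [IsHermitian, conjTranspose_add, conjTranspose_vecMulVec, star_trivial]
    abel
  · rw [vecMulVec_add_eq_transpose_mul_swapPairs_mul,
      charpoly_mul_comm_of_le _ _ (by simpa using h4), Fintype.card_fin, Matrix.mul_assoc]
  · rw [Matrix.mul_assoc, trace_swapPairs_mul]
    change w ⬝ᵥ u + u ⬝ᵥ w + z ⬝ᵥ a + a ⬝ᵥ z = 0
    rw [dotProduct_comm w, dotProduct_comm z, huw, haz]
    norm_num
  · rw [Matrix.mul_assoc, det_mul, det_swapPairs, one_mul]
    exact hgram.det_pos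

end Matrix

namespace lollipop

open SimpleGraph

variable {m n : ℕ}

theorem adj_inl_inl {i j : Fin m} (h : i ≠ j) : (lollipop m n).Adj (.inl i) (.inl j) :=
  ⟨by simpa using h, .inl (.inl ⟨i, j, rfl, rfl⟩)⟩

theorem adj_inr_succ {i j : Fin n} (h : (j : ℕ) = i + 1) : (lollipop m n).Adj (.inr i) (.inr j) :=
  ⟨by simp [Fin.ext_iff]; omega, .inl (.inr (.inl ⟨i, j, rfl, rfl, h⟩))⟩

theorem adj_bridge {i : Fin m} {j : Fin n} (hi : (i : ℕ) = 0) (hj : (j : ℕ) = 0) :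
    (lollipop m n).Adj (.inl i) (.inr j) :=
  ⟨by simp, .inl (.inr (.inr ⟨i, j, rfl, rfl, hi, hj⟩))⟩

/-- Position along the stick, with the clique hanging off its start: a `1`-Lipschitz function
that certifies the lower bounds on distances. -/
def level : Fin m ⊕ Fin n → ℤ :=
  Sum.elim (fun i => if (i : ℕ) = 0 then -1 else -2) (fun j => j)

theorem abs_level_sub_le_one ⦃x y : Fin m ⊕ Fin n⦄ (h : (lollipop m n).Adj x y) :
    |level x - level y| ≤ 1 := by
  obtain ⟨-, h | h⟩ := h <;>
  · rcases h with ⟨i, j, rfl, rfl⟩ | ⟨i, j, rfl, rfl, hij⟩ | ⟨i, j, rfl, rfl, hi, hj⟩ <;>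
      simp only [level, Sum.elim_inl, Sum.elim_inr, abs_le] <;> (try split_ifs) <;> omega

theorem dist_eq_of_walk {x y : Fin m ⊕ Fin n} (p : (lollipop m n).Walk x y)
    (hp : level y = level x + p.length) : (lollipop m n).dist x y = p.length :=
  dist_eq_length_of_length_eq_abs_sub abs_level_sub_le_one p (by simp [hp])

theorem exists_walk_inr (i : Fin n) : ∀ (d : ℕ) (j : Fin n), (j : ℕ) = i + d →
    ∃ p : (lollipop m n).Walk (.inr i) (.inr j), p.length = d
  | 0, j, h => by
    obtain rfl : i = j := Fin.ext h.symm
    exact ⟨.nil, rfl⟩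
  | d + 1, j, h => by
    obtain ⟨p, hp⟩ := exists_walk_inr i d ⟨j - 1, by omega⟩ (by dsimp only; omega)
    exact ⟨p.concat (adj_inr_succ (by dsimp only; omega)), by simp [hp]⟩

theorem dist_inl_inl_le_one (i j : Fin m) : (lollipop m n).dist (.inl i) (.inl j) ≤ 1 := by
  rcases eq_or_ne i j with rfl | h
  · simp
  · exact (dist_eq_one_iff_adj.mpr (adj_inl_inl h)).le

theorem dist_inr_inr_of_le {i j : Fin n} (h : i ≤ j) :
    (lollipop m n).dist (.inr i) (.inr j) = j - i := by
  obtain ⟨p, hp⟩ := exists_walk_inr i (j - i) j (by omega)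
  rw [dist_eq_of_walk p (by simp [level, hp]; omega), hp]

theorem dist_inr_inr (i j : Fin n) :
    (lollipop m n).dist (.inr i) (.inr j) = (i : ℕ) - j + (j - i) := by
  rcases le_total i j with h | h
  · rw [dist_inr_inr_of_le h]; omega
  · rw [dist_comm, dist_inr_inr_of_le h]; omega

theorem dist_inl_inr (i : Fin m) (j : Fin n) :
    (lollipop m n).dist (.inl i) (.inr j) = if (i : ℕ) = 0 then (j : ℕ) + 1 else (j : ℕ) + 2 := by
  have hm : 0 < m := i.pos
  have hn : 0 < n := j.pos
  obtain ⟨p, hp⟩ := exists_walk_inr (m := m) ⟨0, hn⟩ j j (by simp)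
  have bridge : (lollipop m n).Adj (.inl ⟨0, hm⟩) (.inr ⟨0, hn⟩) := adj_bridge rfl rfl
  split_ifs with hi
  · obtain rfl : i = ⟨0, hm⟩ := Fin.ext hi
    rw [dist_eq_of_walk (.cons bridge p) (by simp [level, hp])]
    simp [hp]
  · have hne : i ≠ ⟨0, hm⟩ := by simp [Fin.ext_iff, hi]
    rw [dist_eq_of_walk (.cons (adj_inl_inl hne) (.cons bridge p)) (by simp [level, hp, hi]; ring)]
    simp [hp]

theorem ecc_inl (hn : 0 < n) (i : Fin m) :
    (lollipop m n).ecc (.inl i) = if (i : ℕ) = 0 then n else n + 1 := by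
  refine le_antisymm (ecc_le_iff.mpr fun v => ?_) ?_
  · rcases v with k | k
    · have := dist_inl_inl_le_one (n := n) i k
      split_ifs <;> omega
    · rw [dist_inl_inr]
      split_ifs <;> omega
  · refine le_trans ?_ (dist_le_ecc _ (.inr ⟨n - 1, by omega⟩))
    rw [dist_inl_inr]
    split_ifs <;> dsimp only <;> omega

theorem ecc_inr (hm : 1 < m) (j : Fin n) :
    (lollipop m n).ecc (.inr j) = max ((j : ℕ) + 2) (n - 1 - j) := by
  have hj := j.isLt
  refine le_antisymm (ecc_le_iff.mpr fun v => ?_) (max_le ?_ ?_)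
  · rcases v with k | k
    · rw [dist_comm, dist_inl_inr]
      split_ifs <;> omega
    · rw [dist_inr_inr]
      omega
  · refine le_trans ?_ (dist_le_ecc _ (.inl ⟨1, hm⟩))
    simp [dist_comm, dist_inl_inr]
  · refine le_trans ?_ (dist_le_ecc _ (.inr ⟨n - 1, by omega⟩))
    simp [dist_inr_inr]

/- The hub `inl 0` is the clique vertex on the bridge, the path runs from `inr 0` to its end
`inr (n - 1)`, and the rim is the rest of the clique. `rimDist` and `endDist` are the distances
to the rim and to the end, kept exactly at the vertices whose eccentricity they realise. -/
variable (m n) in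
def rimIndicator : Fin m ⊕ Fin n → ℝ :=
  Sum.elim (fun i => if (i : ℕ) = 0 then 0 else 1) 0

variable (m n) in
def rimDist : Fin m ⊕ Fin n → ℝ :=
  Sum.elim 0 (fun j => if n ≤ 2 * (j : ℕ) + 3 then ((j + 2 : ℕ) : ℝ) else 0)

variable (m n) in
def endDist : Fin m ⊕ Fin n → ℝ :=
  Sum.elim (fun i => if (i : ℕ) = 0 then (n : ℝ) else 0)
    (fun j => if 2 * (j : ℕ) + 3 ≤ n then ((n - 1 - j : ℕ) : ℝ) else 0)

variable (m n) in
def endIndicator : Fin m ⊕ Fin n → ℝ :=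
  Sum.elim 0 (fun j => if (j : ℕ) = n - 1 then 1 else 0)

@[simp]
theorem rimIndicator_inr (j : Fin n) : rimIndicator m n (.inr j) = 0 := rfl

@[simp]
theorem rimDist_inl (i : Fin m) : rimDist m n (.inl i) = 0 := rfl

@[simp]
theorem endIndicator_inl (i : Fin m) : endIndicator m n (.inl i) = 0 := rfl

theorem eccMatrix_inl_inl (hn : 1 < n) (i j : Fin m) :
    (lollipop m n).eccMatrix (.inl i) (.inl j) = 0 := by
  have := dist_inl_inl_le_one (n := n) i j
  simp only [eccMatrix, of_apply, ecc_inl (n := n) (by omega)]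
  split_ifs <;> first | rfl | omega

theorem eccMatrix_inl_inr (hm : 1 < m) (i : Fin m) (j : Fin n) :
    (lollipop m n).eccMatrix (.inl i) (.inr j) =
      rimIndicator m n (.inl i) * rimDist m n (.inr j) +
        endDist m n (.inl i) * endIndicator m n (.inr j) := by
  have hj := j.isLt
  simp only [eccMatrix, of_apply, dist_inl_inr, ecc_inl j.pos, ecc_inr hm, rimIndicator, rimDist,
    endDist, endIndicator, Sum.elim_inl, Sum.elim_inr]
  split_ifs <;> simp only [mul_one, one_mul, mul_zero, zero_mul, add_zero, zero_add] <;>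
    norm_cast <;> omega

theorem eccMatrix_inr_inr (hm : 1 < m) (i j : Fin n) :
    (lollipop m n).eccMatrix (.inr i) (.inr j) =
      endDist m n (.inr i) * endIndicator m n (.inr j) +
        endIndicator m n (.inr i) * endDist m n (.inr j) := by
  have hi := i.isLt
  have hj := j.isLt
  simp only [eccMatrix, of_apply, dist_inr_inr, ecc_inr hm, endDist, endIndicator, Sum.elim_inr]
  split_ifs <;> simp only [mul_one, one_mul, mul_zero, zero_mul, add_zero, zero_add] <;>
    norm_cast <;> omega

theorem eccMatrix_eq (hm : 1 < m) (hn : 1 < n) :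
    (lollipop m n).eccMatrix =
      vecMulVec (rimIndicator m n) (rimDist m n) + vecMulVec (rimDist m n) (rimIndicator m n) +
        vecMulVec (endDist m n) (endIndicator m n) +
        vecMulVec (endIndicator m n) (endDist m n) := by
  ext (i | i) (j | j)
  · simp [eccMatrix_inl_inl hn, vecMulVec_apply]
  · simp [eccMatrix_inl_inr hm, vecMulVec_apply]
  · rw [eccMatrix_comm, eccMatrix_inl_inr hm]
    simp [vecMulVec_apply, mul_comm]
  · simp [eccMatrix_inr_inr hm, vecMulVec_apply]

theorem rimIndicator_dotProduct_rimDist : rimIndicator m n ⬝ᵥ rimDist m n = 0 := by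
  simp [dotProduct, rimIndicator, rimDist]

theorem endDist_dotProduct_endIndicator : endDist m n ⬝ᵥ endIndicator m n = 0 := by
  refine Finset.sum_eq_zero fun x _ => ?_
  rcases x with i | j
  · simp
  · simp only [endDist, endIndicator, Sum.elim_inr]
    split_ifs <;> first | omega | simp

theorem linearIndependent (hm : 1 < m) (hn : 1 < n) :
    LinearIndependent ℝ ![rimIndicator m n, rimDist m n, endDist m n, endIndicator m n] := by
  rw [Fintype.linearIndependent_iff]
  intro c hc
  have hval (x : Fin m ⊕ Fin n) : c 0 * rimIndicator m n x + c 1 * rimDist m n x +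
      c 2 * endDist m n x + c 3 * endIndicator m n x = 0 := by
    simpa [Fin.sum_univ_four] using congrFun hc x
  have hc0 : c 0 = 0 := by
    simpa [rimIndicator, endDist] using hval (.inl ⟨1, hm⟩)
  have hn0 : n ≠ 0 := by omega
  have hc2 : c 2 = 0 := by
    simpa [rimIndicator, endDist, hn0] using hval (.inl ⟨0, by omega⟩)
  have hfar : n ≤ 2 * (n - 2) + 3 := by omega
  have hnear : n - 2 ≠ n - 1 := by omega
  have hw : ((n - 2 : ℕ) : ℝ) + 2 ≠ 0 := by positivity
  have hc1 : c 1 = 0 := by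
    simpa [rimDist, endDist, endIndicator, hc2, hfar, hnear, hw]
      using hval (.inr ⟨n - 2, by omega⟩)
  have hc3 : c 3 = 0 := by
    simpa [rimDist, endIndicator, hc1, hc2] using hval (.inr ⟨n - 1, by omega⟩)
  intro i
  fin_cases i <;> assumption

end lollipop

/-- The inertia of the eccentricity matrix of the lollipop graph `L_{m,n}` (`n ≥ 2`) is
`(2, 2, m + n - 4)`: two positive eigenvalues, two negative eigenvalues, and `0` with
multiplicity `m + n - 4`. -/
theorem eccMatrix_lollipop_inertia (m n : ℕ) (hm : 3 ≤ m) (hn : 2 ≤ n) :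
    Multiset.card ((lollipop m n).eccMatrix.charpoly.roots.filter fun x => 0 < x) = 2 ∧
    Multiset.card ((lollipop m n).eccMatrix.charpoly.roots.filter fun x => x < 0) = 2 ∧
    Multiset.count (0 : ℝ) (lollipop m n).eccMatrix.charpoly.roots = m + n - 4 := by
  have h := Matrix.inertia_vecMulVec_add (lollipop.linearIndependent (by omega : 1 < m) hn)
    lollipop.rimIndicator_dotProduct_rimDist lollipop.endDist_dotProduct_endIndicator
  rw [← lollipop.eccMatrix_eq (by omega : 1 < m) hn, Fintype.card_sum, Fintype.card_fin,
    Fintype.card_fin] at h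
  simpa only [Matrix.inertia, Multiset.inertia, Prod.mk.injEq] using h
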